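/- arXiv:2507.08358 — 2 statements merged into one kernel-verified Lean document; each statement's English description precedes it below -/
import Mathlib

section
/- There exist 2×2 positive definite matrices A, B and r > 1 such that d_H(A^r, B^r) > r · d_H(A, B). Concretely, with A = diag(1,2) and B = HAH (H the normalized Hadamard matrix), one has ‖A^{-r/2} B^r A^{-r/2}‖_∞ > ‖A^{-1/2} B A^{-1/2}‖_∞^r for every r > 1. -/
open scoped BigOperators ENNReal Kronecker ComplexOrder
open Matrix

noncomputable section

/-- The Schatten `p`-norm of a (possibly rectangular) complex matrix, defined via the
eigenvalues of `Xᴴ * X` (squares of the singular values); `p = ∞` gives the operator norm. -/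
noncomputable def sNorm {a b : Type*} [Fintype a] [Fintype b] [DecidableEq b]
    (p : ℝ≥0∞) (X : Matrix a b ℂ) : ℝ :=
  if p = ∞ then ⨆ i, Real.sqrt (((Matrix.posSemidef_conjTranspose_mul_self X).1).eigenvalues i)
  else (∑ i, (((Matrix.posSemidef_conjTranspose_mul_self X).1).eigenvalues i) ^ (p.toReal / 2)) ^
    (1 / p.toReal)

/-- Real power of a matrix via the functional calculus on Hermitian matrices
(junk value `0` on non-Hermitian input). -/
noncomputable def mpow {d : ℕ} (A : Matrix (Fin d) (Fin d) ℂ) (r : ℝ) :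
    Matrix (Fin d) (Fin d) ℂ :=
  if hA : A.IsHermitian then
    (hA.eigenvectorUnitary : Matrix (Fin d) (Fin d) ℂ) *
      Matrix.diagonal (fun i => ((hA.eigenvalues i ^ r : ℝ) : ℂ)) *
      star (hA.eigenvectorUnitary : Matrix (Fin d) (Fin d) ℂ)
  else 0

/-- The vector `ℓ_p` norm on `ℂ^n`, `p = ∞` giving the max norm. -/
noncomputable def lpNorm {n : ℕ} (p : ℝ≥0∞) (v : Fin n → ℂ) : ℝ :=
  if p = ∞ then ⨆ i, ‖v i‖
  else (∑ i, ‖v i‖ ^ p.toReal) ^ (1 / p.toReal)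

/-- Mixed `ℓ_q → ℓ_p` norm of a matrix. -/
noncomputable def matMixedNorm {m n : ℕ} (q p : ℝ≥0∞) (A : Matrix (Fin m) (Fin n) ℂ) : ℝ :=
  ⨆ v : Fin n → ℂ, lpNorm p (A.mulVec v) / lpNorm q v

/-- Mixed Schatten `q → p` norm of a linear map between matrix spaces. -/
noncomputable def mapMixedNorm {n m : ℕ} (q p : ℝ≥0∞)
    (Φ : Matrix (Fin n) (Fin n) ℂ →ₗ[ℂ] Matrix (Fin m) (Fin m) ℂ) : ℝ :=
  ⨆ X : Matrix (Fin n) (Fin n) ℂ, sNorm p (Φ X) / sNorm q X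

/-- Mixed Schatten `q → p` norm restricted to positive semidefinite inputs. -/
noncomputable def mapMixedNormPos {n m : ℕ} (q p : ℝ≥0∞)
    (Φ : Matrix (Fin n) (Fin n) ℂ →ₗ[ℂ] Matrix (Fin m) (Fin m) ℂ) : ℝ :=
  ⨆ X : {X : Matrix (Fin n) (Fin n) ℂ // X.PosSemidef}, sNorm p (Φ X.1) / sNorm q X.1

/-- The projective Hilbert metric between (positive definite) matrices. -/
noncomputable def dH {d : ℕ} (A B : Matrix (Fin d) (Fin d) ℂ) : ℝ :=
  Real.log (sNorm ∞ (mpow A (-(1/2)) * B * mpow A (-(1/2)))) +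
    Real.log (sNorm ∞ (mpow B (-(1/2)) * A * mpow B (-(1/2))))

/-- The Hilbert–Schmidt adjoint of a linear map between matrix spaces. -/
noncomputable def hsAdj {n m : ℕ}
    (Λ : Matrix (Fin n) (Fin n) ℂ →ₗ[ℂ] Matrix (Fin m) (Fin m) ℂ) :
    Matrix (Fin m) (Fin m) ℂ →ₗ[ℂ] Matrix (Fin n) (Fin n) ℂ where
  toFun H := Matrix.of fun i j => ((Λ (Matrix.single i j 1))ᴴ * H).trace
  map_add' x y := by
    ext i j
    simp [Matrix.mul_add, Matrix.trace_add]
  map_smul' c x := by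
    ext i j
    simp [Matrix.mul_smul, Matrix.trace_smul]

/-- Application of `id_k ⊗ Φ` to a matrix on `ℂ^k ⊗ ℂ^n`, acting blockwise. -/
def blockMap {n m : ℕ} (Φ : Matrix (Fin n) (Fin n) ℂ →ₗ[ℂ] Matrix (Fin m) (Fin m) ℂ) (k : ℕ)
    (M : Matrix (Fin k × Fin n) (Fin k × Fin n) ℂ) : Matrix (Fin k × Fin m) (Fin k × Fin m) ℂ :=
  Matrix.of fun x y => Φ (Matrix.of fun i j => M (x.1, i) (y.1, j)) x.2 y.2

/-- Complete positivity of a linear map between matrix spaces. -/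
def IsCP {n m : ℕ} (Φ : Matrix (Fin n) (Fin n) ℂ →ₗ[ℂ] Matrix (Fin m) (Fin m) ℂ) : Prop :=
  ∀ (k : ℕ) (M : Matrix (Fin k × Fin n) (Fin k × Fin n) ℂ),
    M.PosSemidef → (blockMap Φ k M).PosSemidef

/-- Partial trace over the second tensor factor. -/
def traceRight {a b : ℕ} (ρ : Matrix (Fin a × Fin b) (Fin a × Fin b) ℂ) :
    Matrix (Fin a) (Fin a) ℂ :=
  Matrix.of fun i j => ∑ k, ρ (i, k) (j, k)

/-- Partial trace over the first tensor factor. -/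
def traceLeft {a b : ℕ} (ρ : Matrix (Fin a × Fin b) (Fin a × Fin b) ℂ) :
    Matrix (Fin b) (Fin b) ℂ :=
  Matrix.of fun i j => ∑ k, ρ (k, i) (k, j)

/-- One step of the (quantum) Boyd iteration: `S(ω) = (Λ*( (Λ ω)^(p-1) ))^e`
where `e` plays the role of `1/(q-1)`. -/
noncomputable def boydS {d : ℕ} (Λ : Matrix (Fin d) (Fin d) ℂ →ₗ[ℂ] Matrix (Fin d) (Fin d) ℂ)
    (p e : ℝ) (ω : Matrix (Fin d) (Fin d) ℂ) : Matrix (Fin d) (Fin d) ℂ :=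
  mpow (hsAdj Λ (mpow (Λ ω) (p - 1))) e

/-- The diagonal matrix `diag(1,2)`. -/
noncomputable def A8 : Matrix (Fin 2) (Fin 2) ℂ := Matrix.diagonal ![1, 2]

/-- The normalized 2×2 Hadamard matrix. -/
noncomputable def H8 : Matrix (Fin 2) (Fin 2) ℂ :=
  (((Real.sqrt 2 : ℝ) : ℂ))⁻¹ • !![1, 1; 1, -1]

/-- `B = H A H`. -/
noncomputable def B8 : Matrix (Fin 2) (Fin 2) ℂ := H8 * A8 * H8

/-! Write `A_t = diag(1, e^{2t})` and `B_t = H A_t H`, so that `A = A_{log 2 / 2}` and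
`B = B_{log 2 / 2}`. A function of a Hermitian 2×2 matrix with spectrum `{1, e^{2t}}` is affine in
it, so `A_t^r = A_{rt}` and `B_t^r = B_{rt}`. The matrix `A_t^{-1/2} B_t A_t^{-1/2}` is real
symmetric with determinant `1` and trace `2 cosh² t`, so its norm is `exp g(t)` with
`g(t) = arcosh (cosh² t)`; conjugating it by the unitary `H` gives `B_t^{-1/2} A_t B_t^{-1/2}`,
whence `d_H(A_t, B_t) = 2 g(t)`. Finally `g` is strictly convex on `[0, ∞)` with `g(0) = 0`, so
`g(rt) > r g(t)` for `r > 1`. -/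

open Real

def arcoshCoshSq (t : ℝ) : ℝ := arcosh (cosh t ^ 2)

lemma arcoshCoshSq_zero : arcoshCoshSq 0 = 0 := by
  simp [arcoshCoshSq, arcosh_zero]

lemma hasDerivAt_arcoshCoshSq {t : ℝ} (ht : 0 < t) :
    HasDerivAt arcoshCoshSq (2 * cosh t / √(cosh t ^ 2 + 1)) t := by
  have hc : 1 < cosh t ^ 2 := one_lt_pow₀ (one_lt_cosh.2 ht.ne') two_ne_zero
  have hsqrt : √((cosh t ^ 2) ^ 2 - 1) = sinh t * √(cosh t ^ 2 + 1) := by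
    rw [show (cosh t ^ 2) ^ 2 - 1 = sinh t ^ 2 * (cosh t ^ 2 + 1) by rw [sinh_sq]; ring,
      sqrt_mul (sq_nonneg _), sqrt_sq (sinh_pos_iff.2 ht).le]
  refine ((hasDerivAt_arcosh hc).comp t ((hasDerivAt_cosh t).pow 2)).congr_deriv ?_
  rw [hsqrt]
  field_simp [(sinh_pos_iff.2 ht).ne']
  ring

lemma div_sqrt_sq_add_one_lt {a b : ℝ} (ha : 0 ≤ a) (hab : a < b) :
    a / √(a ^ 2 + 1) < b / √(b ^ 2 + 1) := by
  rw [div_lt_div_iff₀ (by positivity) (by positivity)]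
  refine lt_of_pow_lt_pow_left₀ 2 (by have := ha.trans hab.le; positivity) ?_
  rw [mul_pow, mul_pow, sq_sqrt (by positivity), sq_sqrt (by positivity)]
  nlinarith

lemma strictConvexOn_arcoshCoshSq : StrictConvexOn ℝ (Set.Ici 0) arcoshCoshSq := by
  refine StrictMonoOn.strictConvexOn_of_deriv (convex_Ici 0) ?_ ?_
  · refine continuousOn_arcosh.comp (by fun_prop) fun t _ => ?_
    exact one_le_pow₀ (one_le_cosh t)
  · rw [interior_Ici]
    intro x hx y hy hxy
    rw [(hasDerivAt_arcoshCoshSq hx).deriv, (hasDerivAt_arcoshCoshSq hy).deriv, mul_div_assoc,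
      mul_div_assoc]
    refine mul_lt_mul_of_pos_left (div_sqrt_sq_add_one_lt (cosh_pos x).le ?_) two_pos
    rwa [cosh_lt_cosh, abs_of_pos hx, abs_of_pos (lt_trans hx hxy)]

lemma mul_arcoshCoshSq_lt {r t : ℝ} (hr : 1 < r) (ht : 0 < t) :
    r * arcoshCoshSq t < arcoshCoshSq (r * t) := by
  have hrt : t < r * t := lt_mul_left ht hr
  have := strictConvexOn_arcoshCoshSq.secant_strict_mono (a := 0) Set.self_mem_Ici ht.le
    (ht.trans hrt).le ht.ne' (ht.trans hrt).ne' hrt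
  simp only [arcoshCoshSq_zero, sub_zero] at this
  rw [div_lt_div_iff₀ ht (ht.trans hrt)] at this
  refine lt_of_mul_lt_mul_left ?_ ht.le
  linarith

lemma one_le_exp_arcoshCoshSq (t : ℝ) : 1 ≤ exp (arcoshCoshSq t) :=
  one_le_exp (arcosh_nonneg (one_le_pow₀ (one_le_cosh t)))

lemma exp_arcoshCoshSq_add_inv (t : ℝ) :
    exp (arcoshCoshSq t) + (exp (arcoshCoshSq t))⁻¹ =
      (1 + exp (2 * t)) * (1 + (exp (2 * t))⁻¹) / 2 := by
  have h : cosh (arcoshCoshSq t) = cosh t ^ 2 := cosh_arcosh (one_le_pow₀ (one_le_cosh t))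
  calc exp (arcoshCoshSq t) + (exp (arcoshCoshSq t))⁻¹ = 2 * cosh (arcoshCoshSq t) := by
        rw [cosh_eq, exp_neg]; ring
    _ = 2 * cosh t ^ 2 := by rw [h]
    _ = (1 + exp (2 * t)) * (1 + (exp (2 * t))⁻¹) / 2 := by
        rw [cosh_eq, exp_neg, show exp (2 * t) = exp t ^ 2 by rw [← exp_nat_mul]; norm_num]
        field_simp
        ring

lemma Matrix.IsHermitian.eigenvalues_fin_two {𝕜 : Type*} [RCLike 𝕜]
    {M : Matrix (Fin 2) (Fin 2) 𝕜} (hM : M.IsHermitian) {a b : ℝ} (htr : M.trace = a + b)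
    (hdet : M.det = a * b) :
    hM.eigenvalues 0 = a ∧ hM.eigenvalues 1 = b ∨
      hM.eigenvalues 0 = b ∧ hM.eigenvalues 1 = a := by
  have hsum : hM.eigenvalues 0 + hM.eigenvalues 1 = a + b := by
    have := hM.trace_eq_sum_eigenvalues
    rw [htr, Fin.sum_univ_two] at this
    exact_mod_cast this.symm
  have hprod : hM.eigenvalues 0 * hM.eigenvalues 1 = a * b := by
    have := hM.det_eq_prod_eigenvalues
    rw [hdet, Fin.prod_univ_two] at this
    exact_mod_cast this.symm
  have hroot : (hM.eigenvalues 0 - a) * (hM.eigenvalues 0 - b) = 0 := by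
    linear_combination hM.eigenvalues 0 * hsum - hprod
  rcases mul_eq_zero.1 hroot with h | h
  · exact Or.inl ⟨by linarith, by linarith⟩
  · exact Or.inr ⟨by linarith, by linarith⟩

lemma cfc_eq_of_spectrum_subset_pair {A : Type*} [Ring A] [StarRing A] [TopologicalSpace A]
    [Algebra ℝ A] [ContinuousFunctionalCalculus ℝ A IsSelfAdjoint] {a : A}
    (ha : IsSelfAdjoint a) {x y : ℝ} (hxy : x ≠ y) (hspec : spectrum ℝ a ⊆ {x, y}) (f : ℝ → ℝ) :
    cfc f a = ((f y - f x) / (y - x)) • a + algebraMap ℝ A ((y * f x - x * f y) / (y - x)) := by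
  have hyx : y - x ≠ 0 := sub_ne_zero.2 hxy.symm
  rw [cfc_congr (g := fun t => (f y - f x) / (y - x) * t + (y * f x - x * f y) / (y - x))]
  · rw [cfc_add .., cfc_const_mul .., cfc_id' .., cfc_const ..]
  · intro t ht
    rcases hspec ht with rfl | rfl <;> field_simp <;> ring

lemma mpow_eq_cfc {d : ℕ} {M : Matrix (Fin d) (Fin d) ℂ} (hM : M.IsHermitian) (r : ℝ) :
    mpow M r = cfc (fun x : ℝ => x ^ r) M := by
  rw [mpow, dif_pos hM, hM.cfc_eq, IsHermitian.cfc, Unitary.conjStarAlgAut_apply]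
  rfl

lemma mpow_eq_of_trace_det {M : Matrix (Fin 2) (Fin 2) ℂ} (hM : M.IsHermitian) {a b : ℝ}
    (hab : a ≠ b) (htr : M.trace = a + b) (hdet : M.det = a * b) (r : ℝ) :
    mpow M r = ((b ^ r - a ^ r) / (b - a)) • M +
      algebraMap ℝ _ ((b * a ^ r - a * b ^ r) / (b - a)) := by
  have hspec : spectrum ℝ M ⊆ {a, b} := by
    rw [hM.spectrum_real_eq_range_eigenvalues]
    rintro _ ⟨i, rfl⟩
    fin_cases i <;> rcases hM.eigenvalues_fin_two htr hdet with h | h <;> simp [h]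
  rw [mpow_eq_cfc hM, cfc_eq_of_spectrum_subset_pair hM hab hspec]

lemma Matrix.trace_mul_self_fin_two {R : Type*} [CommRing R] (X : Matrix (Fin 2) (Fin 2) R) :
    (X * X).trace = X.trace ^ 2 - 2 * X.det := by
  simp only [trace_fin_two, det_fin_two, mul_apply, Fin.sum_univ_two]
  ring

lemma sNorm_top_fin_two {X : Matrix (Fin 2) (Fin 2) ℂ} {a b : ℝ} (hb : 0 ≤ b) (hba : b ≤ a)
    (htr : (Xᴴ * X).trace = ↑(a ^ 2) + ↑(b ^ 2))
    (hdet : (Xᴴ * X).det = ↑(a ^ 2) * ↑(b ^ 2)) :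
    sNorm ∞ X = a := by
  have ha : 0 ≤ a := hb.trans hba
  have hev := (posSemidef_conjTranspose_mul_self X).1.eigenvalues_fin_two
    (a := a ^ 2) (b := b ^ 2) htr hdet
  rw [sNorm, if_pos rfl]
  refine le_antisymm (ciSup_le fun i => ?_) ?_
  · fin_cases i <;> rcases hev with ⟨h0, h1⟩ | ⟨h0, h1⟩ <;>
      simp [h0, h1, sqrt_sq ha, sqrt_sq hb, hba]
  · rcases hev with ⟨h0, -⟩ | ⟨-, h1⟩
    · exact le_ciSup_of_le (Set.finite_range _).bddAbove 0 (by rw [h0, sqrt_sq ha])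
    · exact le_ciSup_of_le (Set.finite_range _).bddAbove 1 (by rw [h1, sqrt_sq ha])

lemma sNorm_top_of_isHermitian_fin_two {X : Matrix (Fin 2) (Fin 2) ℂ} (hX : X.IsHermitian)
    {a : ℝ} (ha : 1 ≤ a) (htr : X.trace = ↑(a + a⁻¹)) (hdet : X.det = 1) :
    sNorm ∞ X = a := by
  have ha0 : a ≠ 0 := by positivity
  refine sNorm_top_fin_two (b := a⁻¹) (by positivity) ((inv_le_one_of_one_le₀ ha).trans ha)
    ?_ ?_
  · rw [hX.eq, trace_mul_self_fin_two, htr, hdet]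
    push_cast
    field_simp
    ring
  · rw [hX.eq, det_mul, hdet]
    push_cast
    field_simp

lemma sNorm_unitary_conj {n : Type*} [Fintype n] [DecidableEq n] {U : Matrix n n ℂ}
    (hU : U ∈ unitaryGroup n ℂ) (p : ℝ≥0∞) (X : Matrix n n ℂ) :
    sNorm p (U * X * star U) = sNorm p X := by
  have hUU : star U * U = 1 := mem_unitaryGroup_iff'.1 hU
  have hgram : (U * X * star U)ᴴ * (U * X * star U) = U * (Xᴴ * X) * star U := by
    simp only [← star_eq_conjTranspose, star_mul, star_star, mul_assoc]
    rw [← mul_assoc (star U) U, hUU, one_mul]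
  have hev : (posSemidef_conjTranspose_mul_self (U * X * star U)).1.eigenvalues =
      (posSemidef_conjTranspose_mul_self X).1.eigenvalues := by
    rw [IsHermitian.eigenvalues_eq_eigenvalues_iff, hgram, charpoly_mul_comm, ← mul_assoc, hUU,
      one_mul]
  simp only [sNorm, hev]

lemma conjTranspose_H8 : H8ᴴ = H8 := by
  ext i j
  fin_cases i <;> fin_cases j <;> simp [H8]

lemma H8_mul_H8 : H8 * H8 = 1 := by
  have hc : ((√2 : ℝ) : ℂ)⁻¹ * ((√2 : ℝ) : ℂ)⁻¹ = 1 / 2 := by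
    rw [← mul_inv, ← Complex.ofReal_mul, mul_self_sqrt zero_le_two]
    norm_num
  simp only [H8, Matrix.smul_mul, Matrix.mul_smul, smul_smul, hc]
  ext i j
  fin_cases i <;> fin_cases j <;> simp <;> norm_num

lemma H8_mem_unitaryGroup : H8 ∈ unitaryGroup (Fin 2) ℂ := by
  rw [mem_unitaryGroup_iff, star_eq_conjTranspose, conjTranspose_H8, H8_mul_H8]

lemma isHermitian_H8_mul_mul_H8 {M : Matrix (Fin 2) (Fin 2) ℂ} (hM : M.IsHermitian) :
    (H8 * M * H8).IsHermitian := by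
  simpa only [conjTranspose_H8] using isHermitian_mul_mul_conjTranspose H8 hM

lemma trace_H8_mul_mul_H8 (M : Matrix (Fin 2) (Fin 2) ℂ) : (H8 * M * H8).trace = M.trace := by
  rw [trace_mul_comm, ← mul_assoc, H8_mul_H8, one_mul]

lemma det_H8_mul_mul_H8 (M : Matrix (Fin 2) (Fin 2) ℂ) : (H8 * M * H8).det = M.det := by
  rw [det_mul, det_mul, mul_right_comm, ← det_mul, H8_mul_H8, det_one, one_mul]

lemma isHermitian_diagonal_one (p : ℝ) : (diagonal ![1, (p : ℂ)]).IsHermitian := by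
  ext i j
  fin_cases i <;> fin_cases j <;> simp

lemma mpow_diagonal_one {p : ℝ} (hp : p ≠ 1) (r : ℝ) :
    mpow (diagonal ![1, (p : ℂ)]) r = diagonal ![1, ((p ^ r : ℝ) : ℂ)] := by
  rw [mpow_eq_of_trace_det (isHermitian_diagonal_one p) hp.symm (by simp [trace_diagonal])
    (by simp [det_diagonal])]
  have hp' : (p : ℂ) - 1 ≠ 0 := sub_ne_zero.2 (by exact_mod_cast hp)
  ext i j
  fin_cases i <;> fin_cases j <;> simp [algebraMap_eq_diagonal] <;> field_simp <;> ring

lemma mpow_H8_mul_mul_H8 {M : Matrix (Fin 2) (Fin 2) ℂ} (hM : M.IsHermitian) {a b : ℝ}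
    (hab : a ≠ b) (htr : M.trace = a + b) (hdet : M.det = a * b) (r : ℝ) :
    mpow (H8 * M * H8) r = H8 * mpow M r * H8 := by
  rw [mpow_eq_of_trace_det (isHermitian_H8_mul_mul_H8 hM) hab
      (by rw [trace_H8_mul_mul_H8, htr]) (by rw [det_H8_mul_mul_H8, hdet]),
    mpow_eq_of_trace_det hM hab htr hdet, Matrix.mul_add, Matrix.add_mul, Matrix.mul_smul,
    Matrix.smul_mul, ← Algebra.commutes]
  simp only [mul_assoc, H8_mul_H8, mul_one]

lemma mpow_H8_mul_diagonal_mul_H8 {p : ℝ} (hp : p ≠ 1) (r : ℝ) :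
    mpow (H8 * diagonal ![1, (p : ℂ)] * H8) r =
      H8 * diagonal ![1, ((p ^ r : ℝ) : ℂ)] * H8 := by
  rw [mpow_H8_mul_mul_H8 (isHermitian_diagonal_one p) hp.symm (by simp [trace_diagonal])
    (by simp [det_diagonal]), mpow_diagonal_one hp]

lemma H8_mul_diagonal_mul_H8 (p : ℂ) :
    H8 * diagonal ![1, p] * H8 = !![(1 + p) / 2, (1 - p) / 2; (1 - p) / 2, (1 + p) / 2] := by
  have hc : ((√2 : ℝ) : ℂ)⁻¹ * ((√2 : ℝ) : ℂ)⁻¹ = 1 / 2 := by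
    rw [← mul_inv, ← Complex.ofReal_mul, mul_self_sqrt zero_le_two]
    norm_num
  simp only [H8, Matrix.smul_mul, Matrix.mul_smul, smul_smul, hc, diagonal_vec2, mul_fin_two]
  ext i j
  fin_cases i <;> fin_cases j <;> simp <;> ring

lemma diagonal_mul_H8_conj_mul_diagonal (p q : ℂ) :
    diagonal ![1, q] * (H8 * diagonal ![1, p] * H8) * diagonal ![1, q] =
      !![(1 + p) / 2, q * (1 - p) / 2; q * (1 - p) / 2, q ^ 2 * (1 + p) / 2] := by
  rw [H8_mul_diagonal_mul_H8, diagonal_vec2, mul_fin_two, mul_fin_two]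
  ext i j
  fin_cases i <;> fin_cases j <;> simp <;> ring

lemma sNorm_top_diagonal_mul_H8_conj_mul_diagonal {p q a : ℝ} (hp : 0 < p) (hq : q ^ 2 = p⁻¹)
    (ha : 1 ≤ a) (htr : a + a⁻¹ = (1 + p) * (1 + p⁻¹) / 2) :
    sNorm ∞ (diagonal ![1, (q : ℂ)] * (H8 * diagonal ![1, (p : ℂ)] * H8) *
      diagonal ![1, (q : ℂ)]) = a := by
  have hp' : (p : ℂ) ≠ 0 := by exact_mod_cast hp.ne'
  have hq' : (q : ℂ) ^ 2 = (p : ℂ)⁻¹ := by exact_mod_cast hq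
  have hX := isHermitian_mul_mul_conjTranspose (diagonal ![1, (q : ℂ)])
    (isHermitian_H8_mul_mul_H8 (isHermitian_diagonal_one p))
  rw [(isHermitian_diagonal_one q).eq] at hX
  refine sNorm_top_of_isHermitian_fin_two hX ha ?_ ?_
  · rw [htr, diagonal_mul_H8_conj_mul_diagonal, trace_fin_two_of, hq']
    push_cast
    ring
  · rw [diagonal_mul_H8_conj_mul_diagonal, det_fin_two_of]
    linear_combination (p : ℂ) * hq' + mul_inv_cancel₀ hp'

lemma dH_diagonal_H8_conj {p a : ℝ} (hp : 1 < p) (ha : 1 ≤ a)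
    (htr : a + a⁻¹ = (1 + p) * (1 + p⁻¹) / 2) :
    dH (diagonal ![1, (p : ℂ)]) (H8 * diagonal ![1, (p : ℂ)] * H8) = 2 * log a := by
  have hp0 : 0 < p := zero_lt_one.trans hp
  obtain ⟨q, hqdef⟩ : ∃ q : ℝ, q = p ^ (-(1 / 2) : ℝ) := ⟨_, rfl⟩
  have hq : q ^ 2 = p⁻¹ := by
    rw [hqdef, ← rpow_natCast, ← rpow_mul hp0.le, ← rpow_neg_one]
    norm_num
  have hHXH : H8 * diagonal ![1, (q : ℂ)] * H8 * diagonal ![1, (p : ℂ)] *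
      (H8 * diagonal ![1, (q : ℂ)] * H8) =
      H8 * (diagonal ![1, (q : ℂ)] * (H8 * diagonal ![1, (p : ℂ)] * H8) *
        diagonal ![1, (q : ℂ)]) * star H8 := by
    simp only [star_eq_conjTranspose, conjTranspose_H8, mul_assoc]
  rw [dH, mpow_diagonal_one hp.ne', mpow_H8_mul_diagonal_mul_H8 hp.ne', ← hqdef, hHXH,
    sNorm_unitary_conj H8_mem_unitaryGroup,
    sNorm_top_diagonal_mul_H8_conj_mul_diagonal hp0 hq ha htr]
  ring

lemma A8_eq : A8 = diagonal ![1, ((2 : ℝ) : ℂ)] := by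
  simp [A8]

lemma mpow_A8 (s : ℝ) : mpow A8 s = diagonal ![1, ((2 ^ s : ℝ) : ℂ)] := by
  rw [A8_eq, mpow_diagonal_one (by norm_num)]

lemma mpow_B8 (s : ℝ) : mpow B8 s = H8 * diagonal ![1, ((2 ^ s : ℝ) : ℂ)] * H8 := by
  rw [B8, A8_eq, mpow_H8_mul_diagonal_mul_H8 (by norm_num)]

lemma exp_arcoshCoshSq_add_inv_eq_two_rpow (r : ℝ) :
    exp (arcoshCoshSq (r * (log 2 / 2))) + (exp (arcoshCoshSq (r * (log 2 / 2))))⁻¹ =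
      (1 + 2 ^ r) * (1 + (2 ^ r)⁻¹) / 2 := by
  rw [exp_arcoshCoshSq_add_inv, rpow_def_of_pos two_pos]
  ring_nf

lemma sNorm_top_mpow_A8_B8 (r : ℝ) :
    sNorm ∞ (mpow A8 (-(r / 2)) * mpow B8 r * mpow A8 (-(r / 2))) =
      exp (arcoshCoshSq (r * (log 2 / 2))) := by
  have hq : ((2 : ℝ) ^ (-(r / 2))) ^ 2 = (2 ^ r)⁻¹ := by
    rw [← rpow_natCast, ← rpow_mul zero_le_two, ← rpow_neg zero_le_two]
    ring_nf
  rw [mpow_A8, mpow_B8]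
  exact sNorm_top_diagonal_mul_H8_conj_mul_diagonal (by positivity) hq
    (one_le_exp_arcoshCoshSq _) (exp_arcoshCoshSq_add_inv_eq_two_rpow r)

lemma dH_mpow_A8_B8 {r : ℝ} (hr : 0 < r) :
    dH (mpow A8 r) (mpow B8 r) = 2 * arcoshCoshSq (r * (log 2 / 2)) := by
  rw [mpow_A8, mpow_B8, dH_diagonal_H8_conj (one_lt_rpow one_lt_two hr)
    (one_le_exp_arcoshCoshSq _) (exp_arcoshCoshSq_add_inv_eq_two_rpow r), log_exp]

lemma mpow_A8_one : mpow A8 1 = A8 := by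
  rw [mpow_A8, rpow_one, A8_eq]

lemma mpow_B8_one : mpow B8 1 = B8 := by
  rw [mpow_B8, rpow_one, B8, A8_eq]

lemma sNorm_top_rpow_lt_A8_B8 {r : ℝ} (hr : 1 < r) :
    sNorm ∞ (mpow A8 (-(1/2)) * B8 * mpow A8 (-(1/2))) ^ r <
      sNorm ∞ (mpow A8 (-(r/2)) * mpow B8 r * mpow A8 (-(r/2))) := by
  have h1 := sNorm_top_mpow_A8_B8 1
  rw [mpow_B8_one, one_mul] at h1
  rw [h1, sNorm_top_mpow_A8_B8, ← exp_mul, exp_lt_exp, mul_comm]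
  exact mul_arcoshCoshSq_lt hr (by positivity)

lemma mul_dH_lt_A8_B8 {r : ℝ} (hr : 1 < r) :
    r * dH A8 B8 < dH (mpow A8 r) (mpow B8 r) := by
  have h1 := dH_mpow_A8_B8 one_pos
  rw [mpow_A8_one, mpow_B8_one, one_mul] at h1
  rw [h1, dH_mpow_A8_B8 (zero_lt_one.trans hr)]
  linarith [mul_arcoshCoshSq_lt hr (t := log 2 / 2) (by positivity)]

lemma A8_posDef : A8.PosDef := by
  rw [A8, posDef_diagonal_iff]
  intro i
  fin_cases i <;> norm_num

lemma B8_posDef : B8.PosDef := by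
  have hinj : Function.Injective H8.mulVec :=
    Function.LeftInverse.injective (g := H8.mulVec) fun v => by
      rw [mulVec_mulVec, H8_mul_H8, one_mulVec]
  simpa only [B8, conjTranspose_H8] using A8_posDef.conjTranspose_mul_mul_same hinj

/-- for `r > 1` the map `A ↦ A^r` expands the Hilbert metric beyond factor `r`
on the concrete pair `A = diag(1,2)`, `B = HAH`; in particular such matrices exist. -/
theorem exists_rpow_hilbert_metric_expansion :
    (∃ (A B : Matrix (Fin 2) (Fin 2) ℂ) (r : ℝ), A.PosDef ∧ B.PosDef ∧ 1 < r ∧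
      r * dH A B < dH (mpow A r) (mpow B r)) ∧
    ∀ r : ℝ, 1 < r →
      sNorm ∞ (mpow A8 (-(1/2)) * B8 * mpow A8 (-(1/2))) ^ r <
        sNorm ∞ (mpow A8 (-(r/2)) * mpow B8 r * mpow A8 (-(r/2))) ∧
      r * dH A8 B8 < dH (mpow A8 r) (mpow B8 r) :=
  ⟨⟨A8, B8, 2, A8_posDef, B8_posDef, one_lt_two, mul_dH_lt_A8_B8 one_lt_two⟩,
    fun _ hr => ⟨sNorm_top_rpow_lt_A8_B8 hr, mul_dH_lt_A8_B8 hr⟩⟩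

end
end

section
/- Let Λ : ℂ^{d×d} → ℂ^{d×d} be a positive (positivity-preserving) linear map satisfying Λ(ω) ≥ (Tr[ω]/(Nd)) 𝟙 for all ω ≥ 0 and ‖Λ‖_{∞→∞} ≤ 1, and suppose Λ is trace preserving. Then for 1 ≤ p ≤ 2 ≤ q ≤ ∞ and any ω ≥ 0 with ‖ω‖_q = 1, the normalized Boyd iterate satisfies S(ω)/‖S(ω)‖_q ≥ (Nd)^{(1−p)/(q−1)} d^{−1/q} 𝟙 ≥ (1/(Nd√d)) 𝟙, where S(ω) = Λ*(Λ(ω)^{p−1})^{1/(q−1)}. -/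
open scoped BigOperators ENNReal Kronecker ComplexOrder
open Matrix

noncomputable section

/-!
A chain of scalar sandwiches in the Loewner order. A normalized `ω ≥ 0` satisfies `ω ≤ 1` and
`Tr ω ≥ ‖ω‖_q = 1`, so `‖Λ‖_{∞→∞} ≤ 1` and positivity improvement give `(Nd)⁻¹ ≤ Λ(ω) ≤ 1`.
Real powers with nonnegative exponent and the unital positive map `Λ*` transport such
sandwiches, hence `(Nd)^{(1-p)/(q-1)} ≤ S(ω) ≤ 1`. Finally a matrix with spectrum in `[α, 1]`
has `α ≤ ‖S‖_q ≤ d^{1/q}`, which gives the bound after normalization. The comparison with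
`1 / (Nd√d)` only uses `(p - 1)/(q - 1) ≤ 1`, `1/q ≤ 1/2` and `Nd ≥ 1`.
-/

open scoped MatrixOrder

namespace Matrix

section Loewner

variable {n : Type*} [DecidableEq n]

lemma isHermitian_real_smul_one (c : ℝ) : ((c : ℂ) • (1 : Matrix n n ℂ)).IsHermitian := by
  simp [IsHermitian, conjTranspose_smul]

lemma IsHermitian.of_smul_one_le {A : Matrix n n ℂ} {c : ℝ} (h : (c : ℂ) • 1 ≤ A) :
    A.IsHermitian := by
  simpa using h.1.add (isHermitian_real_smul_one c)

variable [Fintype n]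

lemma unitary_conj_diagonal_le_iff (U : unitaryGroup n ℂ) (v w : n → ℝ) :
    (U : Matrix n n ℂ) * diagonal (fun i => (v i : ℂ)) * star (U : Matrix n n ℂ) ≤
        (U : Matrix n n ℂ) * diagonal (fun i => (w i : ℂ)) * star (U : Matrix n n ℂ) ↔
      ∀ i, v i ≤ w i := by
  rw [le_iff, ← sub_mul, ← mul_sub, diagonal_sub,
    Unitary.isUnit_coe.posSemidef_star_right_conjugate_iff, posSemidef_diagonal_iff]
  simp [← Complex.ofReal_sub, Complex.zero_le_real]

lemma smul_one_eq_unitary_conj_diagonal (U : unitaryGroup n ℂ) (c : ℝ) :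
    (c : ℂ) • (1 : Matrix n n ℂ) =
      (U : Matrix n n ℂ) * diagonal (fun _ => (c : ℂ)) * star (U : Matrix n n ℂ) := by
  rw [← smul_one_eq_diagonal, Matrix.mul_smul, Matrix.smul_mul, mul_one,
    Unitary.mul_star_self_of_mem U.2]

lemma real_smul_one_le_real_smul_one {a b : ℝ} (h : a ≤ b) :
    (a : ℂ) • (1 : Matrix n n ℂ) ≤ (b : ℂ) • 1 := by
  rw [smul_one_eq_unitary_conj_diagonal 1, smul_one_eq_unitary_conj_diagonal 1 b,
    unitary_conj_diagonal_le_iff]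
  exact fun _ => h

lemma PosSemidef.of_smul_one_le {a : ℝ} (ha : 0 ≤ a) {A : Matrix n n ℂ} (h : (a : ℂ) • 1 ≤ A) :
    A.PosSemidef := by
  rw [← nonneg_iff_posSemidef]
  exact le_trans (by simpa using real_smul_one_le_real_smul_one (n := n) ha) h

lemma IsHermitian.eq_unitary_conj_diagonal {A : Matrix n n ℂ} (hA : A.IsHermitian) :
    A = (hA.eigenvectorUnitary : Matrix n n ℂ) * diagonal (fun i => (hA.eigenvalues i : ℂ)) *
      star (hA.eigenvectorUnitary : Matrix n n ℂ) := by
  conv_lhs => rw [hA.spectral_theorem]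
  rfl

lemma IsHermitian.smul_one_le_iff {A : Matrix n n ℂ} (hA : A.IsHermitian) (c : ℝ) :
    (c : ℂ) • 1 ≤ A ↔ ∀ i, c ≤ hA.eigenvalues i := by
  conv_lhs =>
    rw [smul_one_eq_unitary_conj_diagonal hA.eigenvectorUnitary]
    arg 2
    rw [hA.eq_unitary_conj_diagonal]
  exact unitary_conj_diagonal_le_iff _ _ _

lemma IsHermitian.le_smul_one_iff {A : Matrix n n ℂ} (hA : A.IsHermitian) (c : ℝ) :
    A ≤ (c : ℂ) • 1 ↔ ∀ i, hA.eigenvalues i ≤ c := by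
  conv_lhs =>
    rw [smul_one_eq_unitary_conj_diagonal hA.eigenvectorUnitary]
    arg 1
    rw [hA.eq_unitary_conj_diagonal]
  exact unitary_conj_diagonal_le_iff _ _ _

lemma le_of_smul_one_le_of_le_smul_one [Nonempty n] {A : Matrix n n ℂ} {a b : ℝ}
    (ha : (a : ℂ) • 1 ≤ A) (hb : A ≤ (b : ℂ) • 1) : a ≤ b := by
  have hA := IsHermitian.of_smul_one_le ha
  obtain ⟨i⟩ := ‹Nonempty n›
  exact ((hA.smul_one_le_iff a).mp ha i).trans ((hA.le_smul_one_iff b).mp hb i)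

lemma IsHermitian.conjTranspose_mul_self_eq {A : Matrix n n ℂ} (hA : A.IsHermitian) :
    Aᴴ * A = (hA.eigenvectorUnitary : Matrix n n ℂ) *
      diagonal (fun i => ((hA.eigenvalues i ^ 2 : ℝ) : ℂ)) *
        star (hA.eigenvectorUnitary : Matrix n n ℂ) := by
  have hU := Unitary.star_mul_self_of_mem hA.eigenvectorUnitary.2
  conv_lhs => rw [hA.eq, hA.eq_unitary_conj_diagonal]
  simp only [Matrix.mul_assoc]
  rw [← Matrix.mul_assoc (star _) (hA.eigenvectorUnitary : Matrix n n ℂ), hU, Matrix.one_mul,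
    ← Matrix.mul_assoc (diagonal _), diagonal_mul_diagonal]
  simp [sq]

lemma posSemidef_of_forall_dotProduct_mulVec_nonneg {M : Matrix n n ℂ}
    (h : ∀ x, 0 ≤ star x ⬝ᵥ (M *ᵥ x)) : M.PosSemidef := by
  refine .of_dotProduct_mulVec_nonneg (isSymmetric_toEuclideanLin_iff.mp ?_) h
  refine (LinearMap.isSymmetric_iff_inner_map_self_real _).mpr fun v => ?_
  have hv : inner ℂ v (M.toEuclideanLin v) = star v.ofLp ⬝ᵥ (M *ᵥ v.ofLp) := by
    simp [EuclideanSpace.inner_eq_star_dotProduct, dotProduct_comm]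
  rw [← inner_conj_symm, hv, Complex.conj_conj, starRingEnd_apply,
    (IsSelfAdjoint.of_nonneg (h v.ofLp)).star_eq]

lemma PosSemidef.trace_mul_nonneg {A B : Matrix n n ℂ} (hA : A.PosSemidef) (hB : B.PosSemidef) :
    0 ≤ (A * B).trace := by
  obtain ⟨C, rfl⟩ := CStarAlgebra.nonneg_iff_eq_star_mul_self.mp hB.nonneg
  rw [← Matrix.mul_assoc, trace_mul_cycle, star_eq_conjTranspose]
  exact (hA.mul_mul_conjTranspose_same C).trace_nonneg

end Loewner

end Matrix

def sqSingularValues {m n : Type*} [Fintype m] [Fintype n] [DecidableEq n] (X : Matrix m n ℂ) :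
    n → ℝ :=
  (posSemidef_conjTranspose_mul_self X).1.eigenvalues

section SchattenNorm

variable {m n : Type*} [Fintype m] [Fintype n] [DecidableEq n] {q : ℝ≥0∞}

lemma sqSingularValues_nonneg (X : Matrix m n ℂ) (j : n) : 0 ≤ sqSingularValues X j :=
  eigenvalues_conjTranspose_mul_self_nonneg X j

lemma sNorm_top (X : Matrix m n ℂ) : sNorm ∞ X = ⨆ j, √(sqSingularValues X j) :=
  if_pos rfl

lemma sNorm_of_ne_top (hq : q ≠ ∞) (X : Matrix m n ℂ) :
    sNorm q X = (∑ j, sqSingularValues X j ^ (q.toReal / 2)) ^ q.toReal⁻¹ := by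
  rw [sNorm, if_neg hq, one_div]
  rfl

lemma sNorm_nonneg (q : ℝ≥0∞) (X : Matrix m n ℂ) : 0 ≤ sNorm q X := by
  by_cases hq : q = ∞
  · subst hq
    exact sNorm_top X ▸ Real.iSup_nonneg fun j => Real.sqrt_nonneg _
  · exact sNorm_of_ne_top hq X ▸ Real.rpow_nonneg
      (Finset.sum_nonneg fun j _ => Real.rpow_nonneg (sqSingularValues_nonneg X j) _) _

lemma sqrt_sqSingularValues_le_sNorm_top (X : Matrix m n ℂ) (j : n) :
    √(sqSingularValues X j) ≤ sNorm ∞ X :=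
  sNorm_top X ▸ le_ciSup (f := fun j => √(sqSingularValues X j)) (Set.finite_range _).bddAbove j

lemma sqSingularValues_le_sNorm_sq (hq : q ≠ 0) (X : Matrix m n ℂ) (j : n) :
    sqSingularValues X j ≤ sNorm q X ^ 2 := by
  by_cases hq' : q = ∞
  · subst hq'
    exact (Real.sqrt_le_iff.mp (sqrt_sqSingularValues_le_sNorm_top X j)).2
  · have hr : 0 < q.toReal := ENNReal.toReal_pos hq hq'
    have hsum : 0 ≤ ∑ j, sqSingularValues X j ^ (q.toReal / 2) :=
      Finset.sum_nonneg fun j _ => Real.rpow_nonneg (sqSingularValues_nonneg X j) _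
    rw [sNorm_of_ne_top hq', ← Real.rpow_natCast, ← Real.rpow_mul hsum,
      ← Real.rpow_le_rpow_iff (sqSingularValues_nonneg X j) (by positivity) (half_pos hr),
      ← Real.rpow_mul hsum]
    calc sqSingularValues X j ^ (q.toReal / 2)
        ≤ ∑ j, sqSingularValues X j ^ (q.toReal / 2) :=
          Finset.single_le_sum (fun j _ => Real.rpow_nonneg (sqSingularValues_nonneg X j) _)
            (Finset.mem_univ j)
      _ = _ := by
          rw [show q.toReal⁻¹ * ((2 : ℕ) : ℝ) * (q.toReal / 2) = 1 by push_cast; field_simp,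
            Real.rpow_one]

lemma le_sNorm_of_sq_le_sqSingularValues [Nonempty n] (hq : q ≠ 0) {a : ℝ} (ha : 0 ≤ a)
    (X : Matrix m n ℂ) (h : ∀ j, a ^ 2 ≤ sqSingularValues X j) : a ≤ sNorm q X := by
  obtain ⟨j⟩ := ‹Nonempty n›
  by_cases hq' : q = ∞
  · subst hq'
    exact (Real.le_sqrt ha (sqSingularValues_nonneg X j)).mpr (h j) |>.trans
      (sqrt_sqSingularValues_le_sNorm_top X j)
  · have hr : 0 < q.toReal := ENNReal.toReal_pos hq hq'
    rw [sNorm_of_ne_top hq', Real.le_rpow_inv_iff_of_pos ha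
      (Finset.sum_nonneg fun j _ => Real.rpow_nonneg (sqSingularValues_nonneg X j) _) hr]
    calc a ^ q.toReal = (a ^ 2) ^ (q.toReal / 2) := by
          rw [← Real.rpow_natCast, ← Real.rpow_mul ha]; ring_nf
      _ ≤ sqSingularValues X j ^ (q.toReal / 2) :=
          Real.rpow_le_rpow (by positivity) (h j) (by positivity)
      _ ≤ ∑ j, sqSingularValues X j ^ (q.toReal / 2) :=
          Finset.single_le_sum (fun j _ => Real.rpow_nonneg (sqSingularValues_nonneg X j) _)
            (Finset.mem_univ j)

lemma sNorm_le_mul_card_rpow (hq : q ≠ 0) {b : ℝ} (hb : 0 ≤ b) (X : Matrix m n ℂ)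
    (h : ∀ j, sqSingularValues X j ≤ b ^ 2) :
    sNorm q X ≤ b * (Fintype.card n : ℝ) ^ (1 / q).toReal := by
  by_cases hq' : q = ∞
  · subst hq'
    rw [sNorm_top, ENNReal.div_top, ENNReal.toReal_zero, Real.rpow_zero, mul_one]
    exact Real.iSup_le (fun j => Real.sqrt_le_iff.mpr ⟨hb, h j⟩) hb
  · have hr : 0 < q.toReal := ENNReal.toReal_pos hq hq'
    rw [sNorm_of_ne_top hq', Real.rpow_inv_le_iff_of_pos
      (Finset.sum_nonneg fun j _ => Real.rpow_nonneg (sqSingularValues_nonneg X j) _)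
      (by positivity) hr, Real.mul_rpow hb (by positivity), one_div, ENNReal.toReal_inv,
      ← Real.rpow_mul (by positivity), inv_mul_cancel₀ hr.ne', Real.rpow_one, mul_comm]
    calc ∑ j, sqSingularValues X j ^ (q.toReal / 2) ≤ ∑ _j : n, (b ^ 2) ^ (q.toReal / 2) :=
          Finset.sum_le_sum fun j _ =>
            Real.rpow_le_rpow (sqSingularValues_nonneg X j) (h j) (by positivity)
      _ = (Fintype.card n : ℝ) * b ^ q.toReal := by
          rw [Finset.sum_const, Finset.card_univ, nsmul_eq_mul, ← Real.rpow_natCast,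
            ← Real.rpow_mul hb]
          ring_nf

lemma sNorm_le_sqrt_sum_sqSingularValues (hq : 2 ≤ q) (X : Matrix m n ℂ) :
    sNorm q X ≤ √(∑ j, sqSingularValues X j) := by
  set B := ∑ j, sqSingularValues X j
  have hB : 0 ≤ B := Finset.sum_nonneg fun j _ => sqSingularValues_nonneg X j
  have hle : ∀ j, sqSingularValues X j ≤ B := fun j =>
    Finset.single_le_sum (fun j _ => sqSingularValues_nonneg X j) (Finset.mem_univ j)
  by_cases hq' : q = ∞
  · subst hq'
    exact sNorm_top X ▸ Real.iSup_le (fun j => Real.sqrt_le_sqrt (hle j)) (Real.sqrt_nonneg _)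
  · have hr : 2 ≤ q.toReal := by
      simpa using (ENNReal.toReal_le_toReal (by norm_num) hq').mpr hq
    have hterm : ∀ j, sqSingularValues X j ^ (q.toReal / 2) ≤
        sqSingularValues X j * B ^ (q.toReal / 2 - 1) := fun j => by
      have hμ := sqSingularValues_nonneg X j
      calc sqSingularValues X j ^ (q.toReal / 2)
          = sqSingularValues X j ^ (1 + (q.toReal / 2 - 1)) := by ring_nf
        _ = sqSingularValues X j * sqSingularValues X j ^ (q.toReal / 2 - 1) := by
            rw [Real.rpow_add' hμ (by linarith), Real.rpow_one]
        _ ≤ sqSingularValues X j * B ^ (q.toReal / 2 - 1) := by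
            gcongr
            · linarith
            · exact hle j
    rw [sNorm_of_ne_top hq', Real.sqrt_eq_rpow, Real.rpow_inv_le_iff_of_pos
      (Finset.sum_nonneg fun j _ => Real.rpow_nonneg (sqSingularValues_nonneg X j) _)
      (by positivity) (by linarith), ← Real.rpow_mul hB]
    calc ∑ j, sqSingularValues X j ^ (q.toReal / 2)
        ≤ ∑ j, sqSingularValues X j * B ^ (q.toReal / 2 - 1) := Finset.sum_le_sum fun j _ => hterm j
      _ = B ^ (1 + (q.toReal / 2 - 1)) := by
          rw [← Finset.sum_mul, Real.rpow_add' hB (by linarith), Real.rpow_one]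
      _ = B ^ (1 / 2 * q.toReal) := by ring_nf

end SchattenNorm

namespace Matrix.IsHermitian

variable {n : Type*} [Fintype n] [DecidableEq n] {A : Matrix n n ℂ}

lemma le_sqSingularValues_iff (hA : A.IsHermitian) (c : ℝ) :
    (∀ j, c ≤ sqSingularValues A j) ↔ ∀ i, c ≤ hA.eigenvalues i ^ 2 := by
  refine ((posSemidef_conjTranspose_mul_self A).1.smul_one_le_iff c).symm.trans ?_
  rw [hA.conjTranspose_mul_self_eq,
    smul_one_eq_unitary_conj_diagonal hA.eigenvectorUnitary]
  exact unitary_conj_diagonal_le_iff _ _ _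

lemma sqSingularValues_le_iff (hA : A.IsHermitian) (c : ℝ) :
    (∀ j, sqSingularValues A j ≤ c) ↔ ∀ i, hA.eigenvalues i ^ 2 ≤ c := by
  refine ((posSemidef_conjTranspose_mul_self A).1.le_smul_one_iff c).symm.trans ?_
  rw [hA.conjTranspose_mul_self_eq,
    smul_one_eq_unitary_conj_diagonal hA.eigenvectorUnitary]
  exact unitary_conj_diagonal_le_iff _ _ _

lemma sum_sqSingularValues (hA : A.IsHermitian) :
    ∑ j, sqSingularValues A j = ∑ i, hA.eigenvalues i ^ 2 := by
  have h1 := (posSemidef_conjTranspose_mul_self A).1.trace_eq_sum_eigenvalues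
  have h2 : (Aᴴ * A).trace = ∑ i, (hA.eigenvalues i : ℂ) ^ 2 := by
    rw [hA.conjTranspose_mul_self_eq, trace_mul_cycle,
      Unitary.star_mul_self_of_mem hA.eigenvectorUnitary.2, Matrix.one_mul, trace_diagonal]
    push_cast; rfl
  rw [← Complex.ofReal_inj]
  push_cast
  exact h1.symm.trans h2

end Matrix.IsHermitian

section LoewnerSchatten

variable {n : Type*} [Fintype n] [DecidableEq n] {A : Matrix n n ℂ} {q : ℝ≥0∞}

lemma le_sNorm_of_smul_one_le [Nonempty n] (hq : q ≠ 0) {a : ℝ} (ha : 0 ≤ a)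
    (h : (a : ℂ) • 1 ≤ A) : a ≤ sNorm q A := by
  have hA := IsHermitian.of_smul_one_le h
  refine le_sNorm_of_sq_le_sqSingularValues hq ha A ((hA.le_sqSingularValues_iff _).mpr fun i => ?_)
  exact pow_le_pow_left₀ ha ((hA.smul_one_le_iff a).mp h i) 2

lemma sNorm_le_of_le_smul_one (hq : q ≠ 0) {b : ℝ} (hb : 0 ≤ b) (hA : A.PosSemidef)
    (h : A ≤ (b : ℂ) • 1) : sNorm q A ≤ b * (Fintype.card n : ℝ) ^ (1 / q).toReal := by
  refine sNorm_le_mul_card_rpow hq hb A ((hA.1.sqSingularValues_le_iff _).mpr fun i => ?_)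
  exact pow_le_pow_left₀ (hA.eigenvalues_nonneg i) ((hA.1.le_smul_one_iff b).mp h i) 2

lemma le_sNorm_smul_one (hq : q ≠ 0) (hA : A.IsHermitian) : A ≤ (sNorm q A : ℂ) • 1 := by
  refine (hA.le_smul_one_iff _).mpr fun i =>
    (le_abs_self _).trans (abs_le_of_sq_le_sq ?_ (sNorm_nonneg q A))
  exact (hA.sqSingularValues_le_iff _).mp (sqSingularValues_le_sNorm_sq hq A) i

lemma sNorm_le_sum_eigenvalues (hq : 2 ≤ q) (hA : A.PosSemidef) :
    sNorm q A ≤ ∑ i, hA.1.eigenvalues i := by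
  have hsum : 0 ≤ ∑ i, hA.1.eigenvalues i := Finset.sum_nonneg fun i _ => hA.eigenvalues_nonneg i
  refine (sNorm_le_sqrt_sum_sqSingularValues hq A).trans (Real.sqrt_le_iff.mpr ⟨hsum, ?_⟩)
  rw [hA.1.sum_sqSingularValues]
  exact Finset.sum_sq_le_sq_sum_of_nonneg fun i _ => hA.eigenvalues_nonneg i

lemma smul_one_le_inv_sNorm_smul [Nonempty n] (hq : q ≠ 0) {α b : ℝ} (hα : 0 < α)
    {S : Matrix n n ℂ} (hlow : (α : ℂ) • 1 ≤ S) (hup : S ≤ (b : ℂ) • 1) :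
    ((α * b⁻¹ * (Fintype.card n : ℝ) ^ (-(1 / q).toReal) : ℝ) : ℂ) • 1 ≤
      (((sNorm q S)⁻¹ : ℝ) : ℂ) • S := by
  have hb : 0 < b := hα.trans_le (le_of_smul_one_le_of_le_smul_one hlow hup)
  set s := sNorm q S
  set c := α * b⁻¹ * (Fintype.card n : ℝ) ^ (-(1 / q).toReal) with hc
  have hs : 0 < s := hα.trans_le (le_sNorm_of_smul_one_le hq hα.le hlow)
  have hK : 0 < b * (Fintype.card n : ℝ) ^ (1 / q).toReal := by positivity
  have hcs : c * s ≤ α :=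
    calc c * s = α * (s / (b * (Fintype.card n : ℝ) ^ (1 / q).toReal)) := by
          rw [hc, Real.rpow_neg (Nat.cast_nonneg _)]
          field_simp
      _ ≤ α := mul_le_of_le_one_right hα.le <| (div_le_one hK).mpr <|
          sNorm_le_of_le_smul_one hq hb.le (PosSemidef.of_smul_one_le hα.le hlow) hup
  have hsub : ((s⁻¹ : ℝ) : ℂ) • S - (c : ℂ) • 1 =
      ((s⁻¹ : ℝ) : ℂ) • (S - ((c * s : ℝ) : ℂ) • 1) := by
    rw [smul_sub, smul_smul]
    congr 2
    push_cast
    field_simp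
  rw [le_iff, hsub]
  exact ((real_smul_one_le_real_smul_one hcs).trans hlow).smul (by positivity)

end LoewnerSchatten

section OperatorNorm

open scoped Matrix.Norms.Frobenius

variable {m n : Type*} [Fintype m] [Fintype n] [DecidableEq n]

lemma sum_sqSingularValues_eq_frobenius_sq (X : Matrix m n ℂ) :
    ∑ j, sqSingularValues X j = ‖X‖ ^ 2 := by
  have h1 := (posSemidef_conjTranspose_mul_self X).1.trace_eq_sum_eigenvalues
  have h2 : (Xᴴ * X).trace = ∑ j, ∑ i, (‖X i j‖ : ℂ) ^ 2 := by
    simp [trace, mul_apply, Complex.conj_mul']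
  simp_rw [frobenius_norm_def, Real.rpow_two]
  rw [← Real.sqrt_eq_rpow, Real.sq_sqrt (by positivity), Finset.sum_comm,
    ← Complex.ofReal_inj]
  push_cast
  exact h1.symm.trans h2

lemma sNorm_top_le_frobenius (X : Matrix m n ℂ) : sNorm ∞ X ≤ ‖X‖ := by
  simpa [sum_sqSingularValues_eq_frobenius_sq] using sNorm_le_sqrt_sum_sqSingularValues le_top X

lemma frobenius_le_sNorm_top (X : Matrix m n ℂ) :
    ‖X‖ ≤ √(Fintype.card n) * sNorm ∞ X := by
  rw [← Real.sqrt_sq (sNorm_nonneg ∞ X), ← Real.sqrt_mul (by positivity),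
    Real.le_sqrt (norm_nonneg _) (by positivity), ← sum_sqSingularValues_eq_frobenius_sq]
  calc ∑ j, sqSingularValues X j ≤ ∑ _j : n, sNorm ∞ X ^ 2 :=
        Finset.sum_le_sum fun j _ => sqSingularValues_le_sNorm_sq ENNReal.top_ne_zero X j
    _ = _ := by simp

lemma sNorm_top_map_le {n m : ℕ} {Λ : Matrix (Fin n) (Fin n) ℂ →ₗ[ℂ] Matrix (Fin m) (Fin m) ℂ}
    {c : ℝ} (h : mapMixedNorm ∞ ∞ Λ ≤ c) (X : Matrix (Fin n) (Fin n) ℂ) :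
    sNorm ∞ (Λ X) ≤ c * sNorm ∞ X := by
  -- `mapMixedNorm` is a `⨆` in `ℝ` (junk `0` if unbounded), so the ratios must first be shown
  -- bounded; continuity of `Λ` for the Frobenius norm, equivalent to `sNorm ∞`, does it.
  obtain ⟨C, hC0, hC⟩ := (LinearMap.toContinuousLinearMap Λ).bound
  have hbdd : BddAbove (Set.range fun Y => sNorm ∞ (Λ Y) / sNorm ∞ Y) := by
    refine ⟨C * √n, ?_⟩
    rintro _ ⟨Y, rfl⟩
    dsimp only
    rcases (sNorm_nonneg ∞ Y).eq_or_lt with hY | hY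
    · rw [← hY, div_zero]
      positivity
    · rw [div_le_iff₀ hY, mul_assoc]
      calc sNorm ∞ (Λ Y) ≤ ‖Λ Y‖ := sNorm_top_le_frobenius _
        _ ≤ C * ‖Y‖ := hC Y
        _ ≤ _ := by
          gcongr
          simpa using frobenius_le_sNorm_top Y
  rcases (sNorm_nonneg ∞ X).eq_or_lt with hX | hX
  · obtain rfl : X = 0 := norm_le_zero_iff.mp (by simpa [← hX] using frobenius_le_sNorm_top X)
    rw [map_zero, ← hX, mul_zero]
    simpa using sNorm_top_le_frobenius (0 : Matrix (Fin m) (Fin m) ℂ)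
  · rw [← div_le_iff₀ hX]
    exact (le_ciSup hbdd X).trans h

end OperatorNorm

section HilbertSchmidtAdjoint

variable {n m : ℕ} {Λ : Matrix (Fin n) (Fin n) ℂ →ₗ[ℂ] Matrix (Fin m) (Fin m) ℂ}

lemma dotProduct_hsAdj_mulVec (Λ : Matrix (Fin n) (Fin n) ℂ →ₗ[ℂ] Matrix (Fin m) (Fin m) ℂ)
    (H : Matrix (Fin m) (Fin m) ℂ) (x : Fin n → ℂ) :
    star x ⬝ᵥ (hsAdj Λ H *ᵥ x) = ((Λ (vecMulVec x (star x)))ᴴ * H).trace := by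
  have hsingle : ∀ i j (c : ℂ), single (i : Fin n) (j : Fin n) c = c • single i j 1 := by simp
  conv_rhs =>
    rw [matrix_eq_sum_single (vecMulVec x (star x))]
    simp only [hsingle _ _ (vecMulVec x (star x) _ _)]
  simp only [map_sum, map_smul, conjTranspose_sum, conjTranspose_smul, Matrix.sum_mul, smul_mul,
    trace_sum, trace_smul, vecMulVec_apply, dotProduct, mulVec, Finset.mul_sum]
  refine Finset.sum_congr rfl fun i _ => Finset.sum_congr rfl fun j _ => ?_
  simp only [Pi.star_apply, RCLike.star_def, hsAdj, LinearMap.coe_mk, AddHom.coe_mk, of_apply,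
    star_mul', RingHomCompTriple.comp_apply, RingHom.id_apply, smul_eq_mul]
  ring

lemma hsAdj_posSemidef (hpos : ∀ X, X.PosSemidef → (Λ X).PosSemidef)
    {H : Matrix (Fin m) (Fin m) ℂ} (hH : H.PosSemidef) : (hsAdj Λ H).PosSemidef := by
  refine posSemidef_of_forall_dotProduct_mulVec_nonneg fun x => ?_
  have hx := hpos _ (posSemidef_vecMulVec_self_star x)
  rw [dotProduct_hsAdj_mulVec, hx.1.eq]
  exact hx.trace_mul_nonneg hH

lemma hsAdj_mono (hpos : ∀ X, X.PosSemidef → (Λ X).PosSemidef)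
    {H K : Matrix (Fin m) (Fin m) ℂ} (h : H ≤ K) : hsAdj Λ H ≤ hsAdj Λ K := by
  rw [le_iff, ← map_sub]
  exact hsAdj_posSemidef hpos h

lemma hsAdj_one (hTP : ∀ X, (Λ X).trace = X.trace) : hsAdj Λ 1 = 1 := by
  ext i j
  rw [hsAdj, LinearMap.coe_mk, AddHom.coe_mk, of_apply, Matrix.mul_one, trace_conjTranspose, hTP]
  by_cases h : i = j
  · subst h
    simp
  · simp [h, trace_single_eq_of_ne]

lemma hsAdj_smul_one (hTP : ∀ X, (Λ X).trace = X.trace) (c : ℂ) : hsAdj Λ (c • 1) = c • 1 := by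
  rw [map_smul, hsAdj_one hTP]

end HilbertSchmidtAdjoint

section MatrixPower

variable {d : ℕ} {A : Matrix (Fin d) (Fin d) ℂ}

lemma mpow_of_isHermitian (hA : A.IsHermitian) (r : ℝ) :
    mpow A r = (hA.eigenvectorUnitary : Matrix (Fin d) (Fin d) ℂ) *
      diagonal (fun i => ((hA.eigenvalues i ^ r : ℝ) : ℂ)) *
        star (hA.eigenvectorUnitary : Matrix (Fin d) (Fin d) ℂ) :=
  dif_pos hA

lemma rpow_smul_one_le_mpow {a r : ℝ} (ha : 0 ≤ a) (hr : 0 ≤ r) (h : (a : ℂ) • 1 ≤ A) :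
    ((a ^ r : ℝ) : ℂ) • 1 ≤ mpow A r := by
  have hA := IsHermitian.of_smul_one_le h
  rw [mpow_of_isHermitian hA, smul_one_eq_unitary_conj_diagonal hA.eigenvectorUnitary,
    unitary_conj_diagonal_le_iff]
  exact fun i => Real.rpow_le_rpow ha ((hA.smul_one_le_iff a).mp h i) hr

lemma mpow_le_rpow_smul_one {b r : ℝ} (hr : 0 ≤ r) (hA : A.PosSemidef) (h : A ≤ (b : ℂ) • 1) :
    mpow A r ≤ ((b ^ r : ℝ) : ℂ) • 1 := by
  rw [mpow_of_isHermitian hA.1, smul_one_eq_unitary_conj_diagonal hA.1.eigenvectorUnitary,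
    unitary_conj_diagonal_le_iff]
  exact fun i => Real.rpow_le_rpow (hA.eigenvalues_nonneg i) ((hA.1.le_smul_one_iff b).mp h i) hr

end MatrixPower

lemma inv_rpow_sub_one_rpow {x : ℝ} (hx : 0 ≤ x) (p e : ℝ) :
    (x⁻¹ ^ (p - 1)) ^ e = x ^ ((1 - p) * e) := by
  rw [← Real.rpow_mul (inv_nonneg.mpr hx), Real.inv_rpow hx, ← Real.rpow_neg hx]
  ring_nf

lemma one_div_mul_sqrt_le_rpow_mul_rpow {x y u v : ℝ} (hx : 1 ≤ x) (hy : 1 ≤ y) (hu : -1 ≤ u)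
    (hv : -(1 / 2) ≤ v) : 1 / (x * √y) ≤ x ^ u * y ^ v := by
  have hy0 : 0 < y := one_pos.trans_le hy
  calc 1 / (x * √y) = x ^ (-1 : ℝ) * y ^ (-(1 / 2) : ℝ) := by
        rw [Real.rpow_neg_one, Real.rpow_neg hy0.le, Real.sqrt_eq_rpow, one_div, mul_inv]
    _ ≤ x ^ u * y ^ v := by gcongr

lemma ENNReal.toReal_one_div_le_half {q : ℝ≥0∞} (hq : 2 ≤ q) : (1 / q).toReal ≤ 1 / 2 := by
  simpa using ENNReal.toReal_mono (by norm_num) (ENNReal.div_le_div_left hq 1)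

lemma ENNReal.toReal_one_div_sub_one_le_one {q : ℝ≥0∞} (hq : 2 ≤ q) :
    (1 / (q - 1)).toReal ≤ 1 := by
  have h : 1 ≤ q - 1 :=
    ENNReal.le_sub_of_add_le_left ENNReal.one_ne_top (by simpa [one_add_one_eq_two] using hq)
  have h' : 1 / (q - 1) ≤ 1 := by simpa using ENNReal.inv_le_one.mpr h
  simpa using ENNReal.toReal_mono ENNReal.one_ne_top h'

lemma map_le_one_of_le_one {n m : ℕ} {Λ : Matrix (Fin n) (Fin n) ℂ →ₗ[ℂ] Matrix (Fin m) (Fin m) ℂ}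
    (hpos : ∀ X, X.PosSemidef → (Λ X).PosSemidef) (hnorm : mapMixedNorm ∞ ∞ Λ ≤ 1)
    {X : Matrix (Fin n) (Fin n) ℂ} (hX : X.PosSemidef) (hX1 : X ≤ 1) : Λ X ≤ 1 := by
  have hsX : sNorm ∞ X ≤ 1 := by
    simpa using sNorm_le_of_le_smul_one ENNReal.top_ne_zero zero_le_one hX (by simpa using hX1)
  have hsΛX : sNorm ∞ (Λ X) ≤ 1 := (sNorm_top_map_le hnorm X).trans (by simpa using hsX)
  simpa using (le_sNorm_smul_one ENNReal.top_ne_zero (hpos X hX).1).trans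
    (real_smul_one_le_real_smul_one hsΛX)

section BoydIterate

variable {d : ℕ} {Λ : Matrix (Fin d) (Fin d) ℂ →ₗ[ℂ] Matrix (Fin d) (Fin d) ℂ}

lemma inv_smul_one_le_map {N : ℝ} (hN : 0 ≤ N)
    (himp : ∀ ω : Matrix (Fin d) (Fin d) ℂ, ω.PosSemidef →
      (Λ ω - (ω.trace / (((N : ℝ) : ℂ) * (d : ℂ))) • 1).PosSemidef)
    {ω : Matrix (Fin d) (Fin d) ℂ} (hω : ω.PosSemidef) (htr : 1 ≤ ∑ i, hω.1.eigenvalues i) :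
    (((N * d)⁻¹ : ℝ) : ℂ) • 1 ≤ Λ ω := by
  have htrace : ω.trace / ((N : ℂ) * d) = (((∑ i, hω.1.eigenvalues i) / (N * d) : ℝ) : ℂ) := by
    rw [hω.1.trace_eq_sum_eigenvalues]
    push_cast
    rfl
  refine (real_smul_one_le_real_smul_one ?_).trans (le_iff.mpr (htrace ▸ himp ω hω))
  rw [inv_eq_one_div]
  gcongr

theorem boydS_bounds (hpos : ∀ X, X.PosSemidef → (Λ X).PosSemidef)
    (hTP : ∀ X, (Λ X).trace = X.trace) {a b p e : ℝ} (ha : 0 ≤ a) (hp : 1 ≤ p) (he : 0 ≤ e)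
    {ω : Matrix (Fin d) (Fin d) ℂ} (hlow : (a : ℂ) • 1 ≤ Λ ω) (hup : Λ ω ≤ (b : ℂ) • 1) :
    (((a ^ (p - 1)) ^ e : ℝ) : ℂ) • 1 ≤ boydS Λ p e ω ∧
      boydS Λ p e ω ≤ (((b ^ (p - 1)) ^ e : ℝ) : ℂ) • 1 := by
  have hp' : 0 ≤ p - 1 := sub_nonneg.mpr hp
  have hB₁ := hsAdj_mono hpos (rpow_smul_one_le_mpow ha hp' hlow)
  have hB₂ := hsAdj_mono hpos (mpow_le_rpow_smul_one hp' (PosSemidef.of_smul_one_le ha hlow) hup)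
  rw [hsAdj_smul_one hTP] at hB₁ hB₂
  have ha' : 0 ≤ a ^ (p - 1) := Real.rpow_nonneg ha _
  exact ⟨rpow_smul_one_le_mpow ha' he hB₁,
    mpow_le_rpow_smul_one he (PosSemidef.of_smul_one_le ha' hB₁) hB₂⟩

end BoydIterate

/-- lower bound on the normalized Boyd iterate for a positivity improving,
trace preserving positive map with `‖Λ‖_{∞→∞} ≤ 1`, for `1 ≤ p ≤ 2 ≤ q ≤ ∞`. -/
theorem boyd_iterate_lower_bound
    {d : ℕ} (hd : 0 < d) (N : ℝ) (hN : 0 < N)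
    (Λ : Matrix (Fin d) (Fin d) ℂ →ₗ[ℂ] Matrix (Fin d) (Fin d) ℂ)
    (hpos : ∀ X : Matrix (Fin d) (Fin d) ℂ, X.PosSemidef → (Λ X).PosSemidef)
    (himp : ∀ ω : Matrix (Fin d) (Fin d) ℂ, ω.PosSemidef →
      (Λ ω - (ω.trace / (((N : ℝ) : ℂ) * (d : ℂ))) • 1).PosSemidef)
    (hnorm : mapMixedNorm ∞ ∞ Λ ≤ 1)
    (hTP : ∀ X, (Λ X).trace = X.trace)
    (p : ℝ) (q : ℝ≥0∞) (hp1 : 1 ≤ p) (hp2 : p ≤ 2) (hq : 2 ≤ q)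
    (ω : Matrix (Fin d) (Fin d) ℂ) (hω : ω.PosSemidef) (hωn : sNorm q ω = 1) :
    ((((sNorm q (boydS Λ p ((1/(q-1)).toReal) ω))⁻¹ : ℝ) : ℂ) •
        boydS Λ p ((1/(q-1)).toReal) ω -
      ((((N * d) ^ ((1 - p) * (1/(q-1)).toReal) * (d : ℝ) ^ (-(1/q).toReal) : ℝ)) : ℂ) •
        1).PosSemidef ∧
    1 / (N * d * Real.sqrt d) ≤
      (N * d) ^ ((1 - p) * (1/(q-1)).toReal) * (d : ℝ) ^ (-(1/q).toReal) := by
  have : Nonempty (Fin d) := ⟨⟨0, hd⟩⟩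
  have hq0 : q ≠ 0 := (lt_of_lt_of_le (by norm_num) hq).ne'
  have hNd : 0 < N * d := by positivity
  have hup : Λ ω ≤ ((1 : ℝ) : ℂ) • 1 := by
    simpa using map_le_one_of_le_one hpos hnorm hω (by simpa [hωn] using le_sNorm_smul_one hq0 hω.1)
  have hlow := inv_smul_one_le_map hN.le himp hω (hωn ▸ sNorm_le_sum_eigenvalues hq hω)
  obtain ⟨hS₁, hS₂⟩ :=
    boydS_bounds (e := (1 / (q - 1)).toReal) hpos hTP (inv_nonneg.mpr hNd.le) hp1
      ENNReal.toReal_nonneg hlow hup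
  refine ⟨?_, ?_⟩
  · rw [← inv_rpow_sub_one_rpow hNd.le]
    refine le_iff.mp ?_
    simpa using smul_one_le_inv_sNorm_smul hq0 (by positivity) hS₁ hS₂
  · have h1Nd : 1 ≤ N * d := (inv_le_one₀ hNd).mp (le_of_smul_one_le_of_le_smul_one hlow hup)
    have he0 : 0 ≤ (1 / (q - 1)).toReal := ENNReal.toReal_nonneg
    have he1 := ENNReal.toReal_one_div_sub_one_le_one hq
    refine one_div_mul_sqrt_le_rpow_mul_rpow h1Nd (by exact_mod_cast hd) ?_ ?_
    · nlinarith
    · linarith [ENNReal.toReal_one_div_le_half hq]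

end
end
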